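/- Let f : ℝ → ℝ be defined by f(x) = α₃ x (1 - α_{KU} x) for α₃, α_{KU} > 0, and let K : [0,T] → ℝ be differentiable with K(0) = K₀ ∈ (0, 1/α_{KU}) and K'(t) ≤ f(K(t)) for all t. Then K(t) ≤ K₀ e^{α₃ t}/((1 - α_{KU}K₀) + K₀ α_{KU} e^{α₃ t}) ≤ 1/α_{KU} for all t ∈ [0,T]. -/

import Mathlib

open Real Set

lemma logistic_denom_pos {α₃ αKU K₀ : ℝ} (hαKU : 0 < αKU)
    (hK₀ : 0 < K₀) (hK₀' : K₀ < 1 / αKU) (t : ℝ) :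
    0 < (1 - αKU * K₀) + K₀ * αKU * exp (α₃ * t) := by
  have h1 : αKU * K₀ < 1 := by
    have := (lt_div_iff₀ hαKU).mp hK₀'
    linarith [this]
  have h2 : 0 < K₀ * αKU * exp (α₃ * t) := by positivity
  linarith

lemma logistic_hasDerivAt {α₃ αKU K₀ : ℝ} (hαKU : 0 < αKU)
    (hK₀ : 0 < K₀) (hK₀' : K₀ < 1 / αKU) (t : ℝ) :
    HasDerivAt (fun s => K₀ * exp (α₃ * s) / ((1 - αKU * K₀) + K₀ * αKU * exp (α₃ * s)))
      (α₃ * (K₀ * exp (α₃ * t) / ((1 - αKU * K₀) + K₀ * αKU * exp (α₃ * t))) *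
        (1 - αKU * (K₀ * exp (α₃ * t) / ((1 - αKU * K₀) + K₀ * αKU * exp (α₃ * t))))) t := by
  have hD := logistic_denom_pos (α₃ := α₃) hαKU hK₀ hK₀' t
  have he : HasDerivAt (fun s : ℝ => exp (α₃ * s)) (exp (α₃ * t) * α₃) t := by
    exact (HasDerivAt.exp (by simpa using (hasDerivAt_id t).const_mul α₃))
  have hN : HasDerivAt (fun s : ℝ => K₀ * exp (α₃ * s)) (K₀ * (exp (α₃ * t) * α₃)) t :=
    he.const_mul K₀
  have hDd : HasDerivAt (fun s : ℝ => (1 - αKU * K₀) + K₀ * αKU * exp (α₃ * s))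
      (K₀ * αKU * (exp (α₃ * t) * α₃)) t := by
    simpa using (he.const_mul (K₀ * αKU)).const_add (1 - αKU * K₀)
  have := hN.div hDd (ne_of_gt hD)
  convert this using 1
  · rfl
  · rfl
  · rfl
  have hc : (1 - αKU * K₀) + K₀ * αKU * exp (α₃ * t) ≠ 0 := ne_of_gt hD
  generalize 1 - αKU * K₀ + K₀ * αKU * rexp (α₃ * t) = D at hc ⊢
  field_simp

/-- Logistic comparison for the uninfected tumor cell population: a subsolution
of `K' ≤ α₃ K (1 - α_{KU} K)` is dominated by the explicit logistic solution,
hence bounded by the carrying capacity `1/α_{KU}`. -/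
theorem tumor_logistic_comparison
    (T α₃ αKU K₀ : ℝ) (hα₃ : 0 < α₃) (hαKU : 0 < αKU)
    (hK₀ : 0 < K₀) (hK₀' : K₀ < 1 / αKU)
    (K : ℝ → ℝ) (hdiff : Differentiable ℝ K) (hinit : K 0 = K₀)
    (hineq : ∀ t ∈ Icc (0 : ℝ) T, deriv K t ≤ α₃ * K t * (1 - αKU * K t)) :
    ∀ t ∈ Icc (0 : ℝ) T,
      K t ≤ K₀ * exp (α₃ * t) / ((1 - αKU * K₀) + K₀ * αKU * exp (α₃ * t)) ∧
      K₀ * exp (α₃ * t) / ((1 - αKU * K₀) + K₀ * αKU * exp (α₃ * t)) ≤ 1 / αKU := by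
  set B : ℝ → ℝ := fun s => K₀ * exp (α₃ * s) / ((1 - αKU * K₀) + K₀ * αKU * exp (α₃ * s))
    with hBdef
  have hD : ∀ t, 0 < (1 - αKU * K₀) + K₀ * αKU * exp (α₃ * t) :=
    fun t => logistic_denom_pos (α₃ := α₃) hαKU hK₀ hK₀' t
  have hB0 : B 0 = K₀ := by
    simp only [hBdef, mul_zero, Real.exp_zero, mul_one]
    have : (1 - αKU * K₀) + K₀ * αKU = 1 := by ring
    rw [this, div_one]
  have hBd : ∀ t, HasDerivAt B (α₃ * B t * (1 - αKU * B t)) t :=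
    fun t => logistic_hasDerivAt hαKU hK₀ hK₀' t
  have hBcont : Continuous B :=
    continuous_iff_continuousAt.mpr fun t => (hBd t).continuousAt
  intro t ht
  constructor
  · -- main comparison
    have hT : (0:ℝ) ≤ T := le_trans ht.1 ht.2
    -- bounds on K and B on [0,T]
    obtain ⟨MK, hMK⟩ := (isCompact_Icc (a := (0:ℝ)) (b := T)).exists_bound_of_continuousOn
      hdiff.continuous.continuousOn
    obtain ⟨MB, hMB⟩ := (isCompact_Icc (a := (0:ℝ)) (b := T)).exists_bound_of_continuousOn
      hBcont.continuousOn
    set C : ℝ := α₃ * (1 + αKU * (MK + MB)) + 1 with hCdef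
    have key : ∀ ε > 0, K t ≤ B t + ε * exp (C * t) := by
      intro ε hε
      have hExpD : ∀ x : ℝ, HasDerivAt (fun s => ε * exp (C * s)) (ε * (exp (C * x) * C)) x := by
        intro x
        exact (HasDerivAt.exp (by simpa using (hasDerivAt_id x).const_mul C)).const_mul ε
      have := image_le_of_deriv_right_lt_deriv_boundary
        (f := K) (f' := deriv K) (a := 0) (b := T)
        (B := fun s => B s + ε * exp (C * s))
        (B' := fun s => α₃ * B s * (1 - αKU * B s) + ε * (exp (C * s) * C))
        hdiff.continuous.continuousOn
        (fun x _ => (hdiff x).hasDerivAt.hasDerivWithinAt)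
        (by
          show K 0 ≤ B 0 + ε * exp (C * 0)
          rw [hinit, hB0, mul_zero, Real.exp_zero, mul_one]
          linarith)
        (fun x => (hBd x).add (hExpD x))
        ?_ ht
      · exact this
      intro x hx hcontact
      have hxIcc : x ∈ Icc (0:ℝ) T := ⟨hx.1, le_of_lt hx.2⟩
      have h1 : deriv K x ≤ α₃ * K x * (1 - αKU * K x) := hineq x hxIcc
      have hKb := hMK x hxIcc
      have hBb := hMB x hxIcc
      rw [Real.norm_eq_abs, abs_le] at hKb hBb
      have he : 0 < ε * exp (C * x) := by positivity
      have hKx : K x = B x + ε * exp (C * x) := hcontact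
      have step : α₃ * K x * (1 - αKU * K x) <
          α₃ * B x * (1 - αKU * B x) + ε * (exp (C * x) * C) := by
        have hdiffid : α₃ * K x * (1 - αKU * K x) - α₃ * B x * (1 - αKU * B x)
            = α₃ * (ε * exp (C * x)) * (1 - αKU * (K x + B x)) := by
          rw [hKx]; ring
        have hbound : α₃ * (ε * exp (C * x)) * (1 - αKU * (K x + B x))
            ≤ (C - 1) * (ε * exp (C * x)) := by
          have h2 : 1 - αKU * (K x + B x) ≤ 1 + αKU * (MK + MB) := by
            nlinarith [hKb.1, hBb.1, hαKU.le]
          have h3 : 0 ≤ α₃ * (ε * exp (C * x)) := by positivity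
          calc α₃ * (ε * exp (C * x)) * (1 - αKU * (K x + B x))
              ≤ α₃ * (ε * exp (C * x)) * (1 + αKU * (MK + MB)) := by
                exact mul_le_mul_of_nonneg_left h2 h3
            _ = (C - 1) * (ε * exp (C * x)) := by rw [hCdef]; ring
        nlinarith [he]
      show deriv K x < α₃ * B x * (1 - αKU * B x) + ε * (exp (C * x) * C)
      linarith
    -- take ε → 0
    by_contra h
    push_neg at h
    have hδ : 0 < K t - B t := by linarith
    have hε : 0 < (K t - B t) / (2 * exp (C * t)) := by positivity
    have hthis := key _ hε
    have hEpos := exp_pos (C * t)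
    have heq : (K t - B t) / (2 * exp (C * t)) * exp (C * t) = (K t - B t) / 2 := by
      field_simp
    rw [heq] at hthis
    linarith
  · -- B t ≤ 1/αKU
    rw [div_le_div_iff₀ (hD t) hαKU]
    have h1 : αKU * K₀ < 1 := by
      have := (lt_div_iff₀ hαKU).mp hK₀'; linarith
    have h2 : 0 < exp (α₃ * t) := exp_pos _
    nlinarith
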